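/- arXiv:math-ph/0304022 — 5 statements merged into one kernel-verified Lean document; each statement's English description precedes it below -/
import Mathlib

section
/- For every integer n ≥ 3, setting θ = π/(4n−2), d₁ = sin((2n−5)θ)/sin θ, d₂ = sin((2n−3)θ)/sin θ, and d₃ = 1/(2 sin θ), the identity d₁·d₃ + 2·d₃² = d₂² holds. -/
/-- For every integer `n ≥ 3`, with `θ = π/(4n−2)`, `d₁ = sin((2n−5)θ)/sin θ`,
`d₂ = sin((2n−3)θ)/sin θ`, `d₃ = 1/(2 sin θ)`, we have `d₁·d₃ + 2·d₃² = d₂²`. -/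
theorem stmt_1 (n : ℤ) (hn : 3 ≤ n)
    (θ d₁ d₂ d₃ : ℝ)
    (hθ : θ = Real.pi / (4 * (n : ℝ) - 2))
    (hd₁ : d₁ = Real.sin ((2 * (n : ℝ) - 5) * θ) / Real.sin θ)
    (hd₂ : d₂ = Real.sin ((2 * (n : ℝ) - 3) * θ) / Real.sin θ)
    (hd₃ : d₃ = 1 / (2 * Real.sin θ)) :
    d₁ * d₃ + 2 * d₃ ^ 2 = d₂ ^ 2 := by
  have hn' : (3 : ℝ) ≤ (n : ℝ) := by exact_mod_cast hn
  have hden : (0 : ℝ) < 4 * (n : ℝ) - 2 := by linarith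
  have hθpos : 0 < θ := by rw [hθ]; positivity
  have hθlt : θ < Real.pi := by
    rw [hθ]
    rw [div_lt_iff₀ hden]
    nlinarith [Real.pi_pos]
  have hs : Real.sin θ ≠ 0 := ne_of_gt (Real.sin_pos_of_pos_of_lt_pi hθpos hθlt)
  have hmul : θ * (4 * (n : ℝ) - 2) = Real.pi := by
    rw [hθ]; field_simp
  have h1 : (2 * (n : ℝ) - 3) * θ = Real.pi / 2 - 2 * θ := by
    nlinarith [hmul]
  have h2 : (2 * (n : ℝ) - 5) * θ = Real.pi / 2 - 2 * (2 * θ) := by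
    nlinarith [hmul]
  rw [hd₁, hd₂, hd₃, h1, h2, Real.sin_pi_div_two_sub, Real.sin_pi_div_two_sub,
    Real.cos_two_mul]
  field_simp
  ring
end

section
/- For every integer n ≥ 5, setting θ = π/(4n−2), d₁ = sin((2n−5)θ)/sin θ, d₂ = sin((2n−3)θ)/sin θ, and d₃ = 1/(2 sin θ), there exist no nonnegative real numbers α, β such that both α² + β² = 1 − 2·d₁·d₃/d₂² and √(d₁·d₃)·d₃/d₂² ≤ α·√(d₁·d₃)/d₂ + β·d₃/d₂ hold. -/
/-!
Since `(4n−2)θ = π`, the dimensions are `d₁ = cos 4θ / sin θ`, `d₂ = cos 2θ / sin θ`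
and `d₃ = 1 / (2 sin θ)`. Cauchy–Schwarz applied to `α·√(d₁d₃) + β·d₃` turns the two
conditions into the cubic inequality `d₁d₃² ≤ (d₂² − 2d₁d₃)(d₁ + d₃)`, which in terms of
`v = sin² 2θ` reads `8v² − 8v + 1 ≤ 0`. For `n ≥ 5` we have `2θ ≤ π/9`, so `v < 1/8` and this fails.
-/

open Real

lemma sq_mul_add_mul_le (a b x y : ℝ) :
    (a * x + b * y) ^ 2 ≤ (a ^ 2 + b ^ 2) * (x ^ 2 + y ^ 2) := by
  nlinarith [sq_nonneg (a * y - b * x)]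

lemma not_exists_of_cubic_lt {d₁ d₂ d₃ : ℝ} (h₁ : 0 ≤ d₁) (h₂ : d₂ ≠ 0) (h₃ : 0 < d₃)
    (h : (d₂ ^ 2 - 2 * d₁ * d₃) * (d₁ + d₃) < d₁ * d₃ ^ 2) :
    ¬ ∃ α β : ℝ, α ^ 2 + β ^ 2 = 1 - 2 * d₁ * d₃ / d₂ ^ 2 ∧
      √(d₁ * d₃) * d₃ / d₂ ^ 2 ≤ α * √(d₁ * d₃) / d₂ + β * d₃ / d₂ := by
  rintro ⟨α, β, hsum, hle⟩
  set r := √(d₁ * d₃)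
  have hr : r ^ 2 = d₁ * d₃ := sq_sqrt (by positivity)
  have hmul : r * d₃ ≤ (α * r + β * d₃) * d₂ := by
    calc r * d₃ = r * d₃ / d₂ ^ 2 * d₂ ^ 2 := by field_simp
      _ ≤ (α * r / d₂ + β * d₃ / d₂) * d₂ ^ 2 := by gcongr
      _ = (α * r + β * d₃) * d₂ := by field_simp
  have hlt : (r * d₃) ^ 2 < (r * d₃) ^ 2 :=
    calc (r * d₃) ^ 2 ≤ ((α * r + β * d₃) * d₂) ^ 2 := by gcongr
      _ = (α * r + β * d₃) ^ 2 * d₂ ^ 2 := by ring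
      _ ≤ (α ^ 2 + β ^ 2) * (r ^ 2 + d₃ ^ 2) * d₂ ^ 2 := by
        gcongr; exact sq_mul_add_mul_le ..
      _ = d₃ * ((d₂ ^ 2 - 2 * d₁ * d₃) * (d₁ + d₃)) := by rw [hsum, hr]; field_simp
      _ < d₃ * (d₁ * d₃ ^ 2) := by gcongr
      _ = (r * d₃) ^ 2 := by rw [mul_pow, hr]; ring
  exact lt_irrefl _ hlt

lemma sin_sub_mul_eq_cos {m θ : ℝ} (k : ℝ) (h : (4 * m - 2) * θ = π) :
    sin ((2 * m - k) * θ) = cos ((k - 1) * θ) := by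
  rw [← sin_pi_div_two_sub]
  congr 1
  linear_combination h / 2

lemma sin_two_mul_sq_lt {θ : ℝ} (h₀ : 0 < θ) (h : θ ≤ π / 18) : sin (2 * θ) ^ 2 < 1 / 8 := by
  have hpos : 0 < sin (2 * θ) := sin_pos_of_pos_of_lt_pi (by linarith) (by linarith [pi_pos])
  have hlt : sin (2 * θ) < 0.35 := by
    linarith [sin_lt (show 0 < 2 * θ by linarith), pi_lt_d2]
  nlinarith

lemma cubic_lt_of_sin_two_mul_sq_lt {θ : ℝ} (hs : 0 < sin θ)
    (hv : sin (2 * θ) ^ 2 < 1 / 8) :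
    ((cos (2 * θ) / sin θ) ^ 2 - 2 * (cos (4 * θ) / sin θ) * (1 / (2 * sin θ))) *
        (cos (4 * θ) / sin θ + 1 / (2 * sin θ)) <
      cos (4 * θ) / sin θ * (1 / (2 * sin θ)) ^ 2 := by
  have hc4 : cos (4 * θ) = 1 - 2 * sin (2 * θ) ^ 2 := by
    rw [show 4 * θ = 2 * (2 * θ) by ring, cos_two_mul, cos_sq']
    ring
  rw [hc4, div_pow, cos_sq']
  field_simp
  nlinarith [sq_nonneg (sin (2 * θ))]

/-- For `n ≥ 5`, with `θ = π/(4n−2)`, `d₁ = sin((2n−5)θ)/sin θ`,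
`d₂ = sin((2n−3)θ)/sin θ`, `d₃ = 1/(2 sin θ)`, there are no nonnegative reals
`α, β` with `α² + β² = 1 − 2d₁d₃/d₂²` and
`√(d₁d₃)·d₃/d₂² ≤ α·√(d₁d₃)/d₂ + β·d₃/d₂`. -/
theorem stmt_5 (n : ℤ) (hn : 5 ≤ n)
    (θ d₁ d₂ d₃ : ℝ)
    (hθ : θ = Real.pi / (4 * (n : ℝ) - 2))
    (hd₁ : d₁ = Real.sin ((2 * (n : ℝ) - 5) * θ) / Real.sin θ)
    (hd₂ : d₂ = Real.sin ((2 * (n : ℝ) - 3) * θ) / Real.sin θ)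
    (hd₃ : d₃ = 1 / (2 * Real.sin θ)) :
    ¬ ∃ α β : ℝ, 0 ≤ α ∧ 0 ≤ β ∧
      α ^ 2 + β ^ 2 = 1 - 2 * d₁ * d₃ / d₂ ^ 2 ∧
      Real.sqrt (d₁ * d₃) * d₃ / d₂ ^ 2 ≤
        α * Real.sqrt (d₁ * d₃) / d₂ + β * d₃ / d₂ := by
  have hn' : (18 : ℝ) ≤ 4 * n - 2 := by
    have : (5 : ℝ) ≤ n := by exact_mod_cast hn
    linarith
  have hθπ : (4 * (n : ℝ) - 2) * θ = π := by rw [hθ]; field_simp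
  have hθ₀ : 0 < θ := by rw [hθ]; exact div_pos pi_pos (by linarith)
  have hθ₁ : θ ≤ π / 18 := by
    rw [hθ]; exact div_le_div_of_nonneg_left pi_pos.le (by norm_num) hn'
  have hs : 0 < sin θ := sin_pos_of_pos_of_lt_pi hθ₀ (by linarith [pi_pos])
  have hc₂ : 0 < cos (2 * θ) :=
    cos_pos_of_mem_Ioo ⟨by linarith [pi_pos], by linarith [pi_pos]⟩
  have hc₄ : 0 < cos (4 * θ) :=
    cos_pos_of_mem_Ioo ⟨by linarith [pi_pos], by linarith [pi_pos]⟩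
  rw [sin_sub_mul_eq_cos 5 hθπ] at hd₁
  rw [sin_sub_mul_eq_cos 3 hθπ] at hd₂
  norm_num at hd₁ hd₂
  subst hd₁ hd₂ hd₃
  rintro ⟨α, β, -, -, hsum, hle⟩
  exact not_exists_of_cubic_lt (by positivity) (by positivity) (by positivity)
    (cubic_lt_of_sin_two_mul_sq_lt hs (sin_two_mul_sq_lt hθ₀ hθ₁)) ⟨α, β, hsum, hle⟩
end

section
/- Setting t = 4·cos²(π/14), one has (t³ − 5t² + 6t − 1) · sin(π/14) = 1; equivalently, with d₃ = 1/(2·sin(π/14)), one has d₃ = (t³ − 5t² + 6t − 1)/2. -/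
open Real

lemma sin_seven_mul' (x : ℝ) :
    Real.sin (7 * x) =
      7 * Real.sin x - 56 * Real.sin x ^ 3 + 112 * Real.sin x ^ 5 - 64 * Real.sin x ^ 7 := by
  have h2s : Real.sin (2 * x) = 2 * Real.sin x * Real.cos x := Real.sin_two_mul x
  have h2c : Real.cos (2 * x) = 2 * Real.cos x ^ 2 - 1 := Real.cos_two_mul x
  have h4s : Real.sin (4 * x) = 2 * Real.sin (2 * x) * Real.cos (2 * x) := by
    have := Real.sin_two_mul (2 * x); rw [show 2 * (2 * x) = 4 * x by ring] at this; exact this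
  have h4c : Real.cos (4 * x) = 2 * Real.cos (2 * x) ^ 2 - 1 := by
    have := Real.cos_two_mul (2 * x); rw [show 2 * (2 * x) = 4 * x by ring] at this; exact this
  have h3s : Real.sin (3 * x) = 3 * Real.sin x - 4 * Real.sin x ^ 3 := Real.sin_three_mul x
  have h3c : Real.cos (3 * x) = 4 * Real.cos x ^ 3 - 3 * Real.cos x := Real.cos_three_mul x
  have h7 : Real.sin (7 * x) =
      Real.sin (3 * x) * Real.cos (4 * x) + Real.cos (3 * x) * Real.sin (4 * x) := by
    have := Real.sin_add (3 * x) (4 * x)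
    rw [show 3 * x + 4 * x = 7 * x by ring] at this; exact this
  have hpyth : Real.sin x ^ 2 + Real.cos x ^ 2 = 1 := Real.sin_sq_add_cos_sq x
  rw [h7, h3s, h3c, h4s, h4c, h2s, h2c]
  linear_combination (32 * Real.sin x * ((Real.cos x ^ 2) ^ 2 +
      Real.cos x ^ 2 * (1 - Real.sin x ^ 2) + (1 - Real.sin x ^ 2) ^ 2) +
    (-16 * Real.sin x - 32 * Real.sin x ^ 3) * (Real.cos x ^ 2 + 1 - Real.sin x ^ 2) -
    12 * Real.sin x + 32 * Real.sin x ^ 3) * hpyth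

/-- With `t = 4·cos²(π/14)`, one has `(t³ − 5t² + 6t − 1)·sin(π/14) = 1`;
equivalently, `d₃ = 1/(2 sin(π/14))` satisfies `d₃ = (t³ − 5t² + 6t − 1)/2`. -/
theorem stmt_9 (t d₃ : ℝ) (ht : t = 4 * Real.cos (Real.pi / 14) ^ 2)
    (hd₃ : d₃ = 1 / (2 * Real.sin (Real.pi / 14))) :
    (t ^ 3 - 5 * t ^ 2 + 6 * t - 1) * Real.sin (Real.pi / 14) = 1 ∧
      d₃ = (t ^ 3 - 5 * t ^ 2 + 6 * t - 1) / 2 := by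
  set θ := Real.pi / 14 with hθ
  have h7 : Real.sin (7 * θ) = 1 := by
    rw [show 7 * θ = Real.pi / 2 by rw [hθ]; ring, Real.sin_pi_div_two]
  have hexp := sin_seven_mul' θ
  rw [h7] at hexp
  have hpyth : Real.sin θ ^ 2 + Real.cos θ ^ 2 = 1 := Real.sin_sq_add_cos_sq θ
  have key : (t ^ 3 - 5 * t ^ 2 + 6 * t - 1) * Real.sin θ = 1 := by
    rw [ht]
    linear_combination (Real.sin θ * (64 * ((Real.cos θ ^ 2) ^ 2 +
        Real.cos θ ^ 2 * (1 - Real.sin θ ^ 2) + (1 - Real.sin θ ^ 2) ^ 2) -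
      80 * (Real.cos θ ^ 2 + 1 - Real.sin θ ^ 2) + 24)) * hpyth - hexp
  refine ⟨key, ?_⟩
  have hspos : 0 < Real.sin θ := by
    apply Real.sin_pos_of_pos_of_lt_pi
    · positivity
    · rw [hθ]; nlinarith [Real.pi_pos]
  rw [hd₃]
  field_simp
  nlinarith [key]
end

section
/- Setting θ = π/14, d₁ = sin(3θ)/sin θ, d₂ = sin(5θ)/sin θ, and d₃ = 1/(2 sin θ), the identity d₂² − 2·d₁·d₃ − d₁² + d₂ = 0 holds. -/
/-!
Clearing the denominator `sin² θ`, the expression becomes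
`sin² 5θ − sin² 3θ + sin 5θ sin θ − sin 3θ`. By product-to-sum formulas
`sin² 5x − sin² 3x + sin 5x sin x = (cos 4x − cos 10x)/2 = sin 3x sin 7x` for every `x`,
and `sin 7θ = sin (π/2) = 1`.
-/

open Real

theorem sin_sq_five_mul_sub_sin_sq_three_mul_add_sin_five_mul_mul_sin (x : ℝ) :
    sin (5 * x) ^ 2 - sin (3 * x) ^ 2 + sin (5 * x) * sin x = sin (3 * x) * sin (7 * x) := by
  have h₅₅ := two_mul_sin_mul_sin (5 * x) (5 * x)
  have h₃₃ := two_mul_sin_mul_sin (3 * x) (3 * x)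
  have h₅₁ := two_mul_sin_mul_sin (5 * x) x
  have h₃₇ := two_mul_sin_mul_sin (3 * x) (7 * x)
  have h₃₇' : cos (3 * x - 7 * x) = cos (5 * x - x) := by
    rw [← cos_neg]; ring_nf
  ring_nf at h₅₅ h₃₃ h₅₁ h₃₇ h₃₇' ⊢
  linear_combination (h₅₅ - h₃₃ + h₅₁ - h₃₇ - h₃₇') / 2

/-- With `θ = π/14`, `d₁ = sin(3θ)/sin θ`, `d₂ = sin(5θ)/sin θ`, `d₃ = 1/(2 sin θ)`,
one has `d₂² − 2d₁d₃ − d₁² + d₂ = 0`. -/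
theorem stmt_10 (θ d₁ d₂ d₃ : ℝ)
    (hθ : θ = Real.pi / 14)
    (hd₁ : d₁ = Real.sin (3 * θ) / Real.sin θ)
    (hd₂ : d₂ = Real.sin (5 * θ) / Real.sin θ)
    (hd₃ : d₃ = 1 / (2 * Real.sin θ)) :
    d₂ ^ 2 - 2 * d₁ * d₃ - d₁ ^ 2 + d₂ = 0 := by
  have hsin : sin θ ≠ 0 := by
    rw [hθ]
    exact (sin_pos_of_pos_of_lt_pi (by positivity) (by linarith [pi_pos])).ne'
  have hsin₇ : sin (7 * θ) = 1 := by
    rw [hθ, show 7 * (π / 14) = π / 2 by ring, sin_pi_div_two]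
  subst hd₁ hd₂ hd₃
  field_simp
  linear_combination (norm := ring_nf)
    sin_sq_five_mul_sub_sin_sq_three_mul_add_sin_five_mul_mul_sin θ + sin (3 * θ) * hsin₇
end

section
/- Set θ = π/14, d₁ = sin(3θ)/sin θ, d₂ = sin(5θ)/sin θ, and d₃ = 1/(2 sin θ). If α and β are real numbers satisfying α² + β² = 1 − 2·d₁·d₃/d₂² and d₂/d₁² + β² + (d₂²/d₁²)·α² = 1, then β = 0. -/
set_option maxHeartbeats 1000000


/-- With `θ = π/14`, `d₁ = sin(3θ)/sin θ`, `d₂ = sin(5θ)/sin θ`, `d₃ = 1/(2 sin θ)`: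
if reals `α, β` satisfy `α² + β² = 1 − 2d₁d₃/d₂²` and
`d₂/d₁² + β² + (d₂²/d₁²)·α² = 1`, then `β = 0`. -/
theorem stmt_11 (θ d₁ d₂ d₃ α β : ℝ)
    (hθ : θ = Real.pi / 14)
    (hd₁ : d₁ = Real.sin (3 * θ) / Real.sin θ)
    (hd₂ : d₂ = Real.sin (5 * θ) / Real.sin θ)
    (hd₃ : d₃ = 1 / (2 * Real.sin θ))
    (h1 : α ^ 2 + β ^ 2 = 1 - 2 * d₁ * d₃ / d₂ ^ 2)
    (h2 : d₂ / d₁ ^ 2 + β ^ 2 + (d₂ ^ 2 / d₁ ^ 2) * α ^ 2 = 1) :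
    β = 0 := by
  have hpi := Real.pi_pos
  set c := Real.cos (Real.pi / 7) with hc
  -- express the sines in terms of c
  have hs1 : Real.sin θ = 4 * c ^ 3 - 3 * c := by
    have : Real.sin θ = Real.cos (3 * (Real.pi / 7)) := by
      rw [← Real.cos_pi_div_two_sub]
      congr 1
      rw [hθ]; ring
    rw [this, Real.cos_three_mul]
  have hs3 : Real.sin (3 * θ) = 2 * c ^ 2 - 1 := by
    have : Real.sin (3 * θ) = Real.cos (2 * (Real.pi / 7)) := by
      rw [← Real.cos_pi_div_two_sub]
      congr 1
      rw [hθ]; ring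
    rw [this, Real.cos_two_mul]
  have hs5 : Real.sin (5 * θ) = c := by
    rw [hc, ← Real.cos_pi_div_two_sub]
    congr 1
    rw [hθ]; ring
  -- positivity of the sines
  have hθpos : 0 < θ := by rw [hθ]; positivity
  have h1pos : 0 < Real.sin θ := Real.sin_pos_of_pos_of_lt_pi hθpos (by rw [hθ]; nlinarith)
  have h3pos : 0 < Real.sin (3 * θ) := Real.sin_pos_of_pos_of_lt_pi (by linarith) (by rw [hθ]; nlinarith)
  have h5pos : 0 < Real.sin (5 * θ) := Real.sin_pos_of_pos_of_lt_pi (by linarith) (by rw [hθ]; nlinarith)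
  -- sin(3θ) < sin(5θ)
  have h35 : Real.sin (3 * θ) < Real.sin (5 * θ) := by
    apply Real.strictMonoOn_sin
    · constructor <;> rw [hθ] <;> nlinarith
    · constructor <;> rw [hθ] <;> nlinarith
    · linarith
  -- the key trigonometric identity
  have key : Real.sin (5 * θ) ^ 2 - Real.sin (3 * θ) ^ 2 - Real.sin (3 * θ)
      + Real.sin θ * Real.sin (5 * θ) = 0 := by
    rw [hs1, hs3, hs5]; ring
  -- translate to the d's
  have hd1pos : 0 < d₁ := by rw [hd₁]; positivity
  have hd2pos : 0 < d₂ := by rw [hd₂]; positivity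
  have hd12 : d₁ < d₂ := by
    rw [hd₁, hd₂]
    gcongr
  have hkey : d₂ ^ 2 - d₁ ^ 2 - 2 * d₁ * d₃ + d₂ = 0 := by
    have hsne : Real.sin θ ≠ 0 := ne_of_gt h1pos
    have hsne' : 4 * c ^ 3 - 3 * c ≠ 0 := hs1 ▸ hsne
    rw [hd₁, hd₂, hd₃, hs1, hs3, hs5]
    field_simp
    ring
  -- algebra: eliminate α²
  have hβ : β ^ 2 * (d₂ ^ 2 - d₁ ^ 2) = 0 := by
    have hd1ne : d₁ ≠ 0 := ne_of_gt hd1pos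
    have hd2ne : d₂ ≠ 0 := ne_of_gt hd2pos
    field_simp at h1 h2
    nlinarith [hkey, h1, h2]
  have hne : d₂ ^ 2 - d₁ ^ 2 ≠ 0 := by nlinarith
  have : β ^ 2 = 0 := by
    rcases mul_eq_zero.mp hβ with h | h
    · exact h
    · exact absurd h hne
  exact pow_eq_zero_iff (by norm_num) |>.mp this
end
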